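/- arXiv:1101.3364 — 2 statements merged into one kernel-verified Lean document; each statement's English description precedes it below -/
import Mathlib

section
/- Let n ≥ 2 and 0 < ε < 1. Then K_ε is not centrally symmetric, i.e., there is no c ∈ ℝⁿ with K_ε − c = −(K_ε − c). -/
open scoped Pointwise

/-- The body `K_ε = {x : |x|³ + ε x_n³ ≤ 1}`, with the last-coordinate index
passed as a parameter `i`. -/
def Keps (n : ℕ) (ε : ℝ) (i : Fin n) : Set (EuclideanSpace ℝ (Fin n)) :=
  {x | ‖x‖ ^ 3 + ε * (x i) ^ 3 ≤ 1}

lemma norm_sq_eq_sum (n : ℕ) (x : EuclideanSpace ℝ (Fin n)) :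
    ‖x‖ ^ 2 = ∑ k, (x k) ^ 2 := by
  have h : ∑ k, ‖x k‖ ^ 2 = ∑ k, (x k) ^ 2 := by
    simp [Real.norm_eq_abs, sq_abs]
  rw [EuclideanSpace.norm_eq, Real.sq_sqrt (by positivity), h]

/-- On `K_ε`, every coordinate other than `i` has square at most 1. -/
lemma coord_sq_le (n : ℕ) (ε : ℝ) (hε0 : 0 < ε) (hε1 : ε < 1) (i j : Fin n)
    (hij : j ≠ i) (x : EuclideanSpace ℝ (Fin n)) (hx : x ∈ Keps n ε i) :
    (x j) ^ 2 ≤ 1 := by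
  have hx' : ‖x‖ ^ 3 + ε * (x i) ^ 3 ≤ 1 := hx
  set r := ‖x‖ with hr
  set t := x i with ht
  have hr0 : (0 : ℝ) ≤ r := norm_nonneg _
  have hsum : (x j) ^ 2 + t ^ 2 ≤ r ^ 2 := by
    rw [hr, norm_sq_eq_sum]
    have hsub := Finset.sum_le_sum_of_subset_of_nonneg
      (Finset.subset_univ ({j, i} : Finset (Fin n)))
      (fun k _ _ => sq_nonneg (x k))
    rwa [Finset.sum_pair hij] at hsub
  have habs : |ε * t ^ 3| ≤ |t| ^ 3 := by
    rw [abs_mul, abs_of_pos hε0, abs_pow]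
    nlinarith [pow_nonneg (abs_nonneg t) 3]
  have h1 : r ^ 3 ≤ 1 + |t| ^ 3 := by
    have h2 := neg_abs_le (ε * t ^ 3)
    linarith
  have h2 : (1 + |t| ^ 3) ^ 2 ≤ (1 + t ^ 2) ^ 3 := by
    rw [← sq_abs t]
    nlinarith [mul_nonneg (sq_nonneg (|t| - 1)) (sq_nonneg |t|), abs_nonneg t,
      sq_nonneg |t|, sq_nonneg (|t| ^ 2), pow_nonneg (abs_nonneg t) 3,
      pow_nonneg (abs_nonneg t) 4]
  have h3 : (r ^ 2) ^ 3 ≤ (1 + t ^ 2) ^ 3 := by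
    nlinarith [pow_nonneg hr0 3, h1, h2, pow_nonneg (abs_nonneg t) 3]
  have h4 : r ^ 2 ≤ 1 + t ^ 2 :=
    le_of_pow_le_pow_left₀ (by norm_num) (by positivity) h3
  linarith

/-- On `K_ε`, the `i`-th coordinate is less than any `a > 0` with `(1+ε)a³ > 1`. -/
lemma coord_i_lt (n : ℕ) (ε : ℝ) (hε0 : 0 < ε) (i : Fin n)
    (x : EuclideanSpace ℝ (Fin n)) (hx : x ∈ Keps n ε i) (a : ℝ) (ha : 0 < a)
    (h3 : 1 < (1 + ε) * a ^ 3) : x i < a := by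
  by_contra hcon
  push_neg at hcon
  have hx' : ‖x‖ ^ 3 + ε * (x i) ^ 3 ≤ 1 := hx
  set r := ‖x‖ with hr
  set t := x i with ht
  have hr0 : (0 : ℝ) ≤ r := norm_nonneg _
  have hsq : t ^ 2 ≤ r ^ 2 := by
    rw [hr, norm_sq_eq_sum]
    exact Finset.single_le_sum (fun k _ => sq_nonneg (x k)) (Finset.mem_univ i)
  have ht0 : 0 < t := lt_of_lt_of_le ha hcon
  have htr : t ≤ r := by nlinarith
  have ha3 : a ^ 3 ≤ t ^ 3 := pow_le_pow_left₀ ha.le hcon 3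
  have ht3 : t ^ 3 ≤ r ^ 3 := pow_le_pow_left₀ ht0.le htr 3
  nlinarith [mul_le_mul_of_nonneg_left ha3 hε0.le]

/-- `K_ε` is not centrally symmetric: there is no `c` with `K_ε − c = −(K_ε − c)`. -/
theorem stmt3 (n : ℕ) (hn : 2 ≤ n) (ε : ℝ) (hε0 : 0 < ε) (hε1 : ε < 1) :
    ¬ ∃ c : EuclideanSpace ℝ (Fin n),
        Keps n ε ⟨n - 1, by omega⟩ - {c} = -(Keps n ε ⟨n - 1, by omega⟩ - {c}) := by
  rintro ⟨c, hc⟩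
  set i : Fin n := ⟨n - 1, by omega⟩ with hidef
  have h1e : (0 : ℝ) < 1 - ε := by linarith
  -- the central symmetry, pointwise
  have key : ∀ x ∈ Keps n ε i, (2 : ℝ) • c - x ∈ Keps n ε i := by
    intro x hx
    have h1 : x - c ∈ Keps n ε i - {c} := Set.sub_mem_sub hx rfl
    rw [hc, Set.mem_neg] at h1
    obtain ⟨k, hk, y, hy, hky⟩ := Set.mem_sub.mp h1
    rw [Set.mem_singleton_iff] at hy
    rw [hy] at hky
    have hk2 : (2 : ℝ) • c - x = k := by
      have h2 : k = -(x - c) + c := by rw [← hky]; abel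
      rw [h2, two_smul]; abel
    rwa [hk2]
  -- membership of singles with small coordinate, off the axis i
  have hsingle : ∀ (j : Fin n), j ≠ i → ∀ r : ℝ, |r| ≤ 1 →
      EuclideanSpace.single j r ∈ Keps n ε i := by
    intro j hj r hr
    show ‖EuclideanSpace.single j r‖ ^ 3 + ε * ((EuclideanSpace.single j r) i) ^ 3 ≤ 1
    rw [EuclideanSpace.norm_single, EuclideanSpace.single_apply,
      if_neg (fun h => hj h.symm)]
    have h0 : (0:ℝ) ≤ |r| := abs_nonneg r
    have : ‖r‖ ^ 3 ≤ 1 := by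
      rw [Real.norm_eq_abs]
      exact pow_le_one₀ h0 hr
    nlinarith
  -- Step 1: c i < 0
  have hci : c i < 0 := by
    set a : ℝ := ((1 - ε)⁻¹) ^ ((1 : ℝ) / 3) with hadef
    have hb : (0 : ℝ) ≤ (1 - ε)⁻¹ := by positivity
    have ha0 : 0 < a := Real.rpow_pos_of_pos (by positivity) _
    have ha3 : a ^ 3 = (1 - ε)⁻¹ := by
      rw [hadef, ← Real.rpow_natCast (((1 - ε)⁻¹) ^ ((1 : ℝ) / 3)) 3,
        ← Real.rpow_mul hb]
      norm_num
    have hkey3 : (1 - ε) * a ^ 3 = 1 := by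
      rw [ha3]; field_simp
    have hmem : EuclideanSpace.single i (-a) ∈ Keps n ε i := by
      show ‖EuclideanSpace.single i (-a)‖ ^ 3 + ε * ((EuclideanSpace.single i (-a)) i) ^ 3 ≤ 1
      rw [EuclideanSpace.norm_single, EuclideanSpace.single_apply, if_pos rfl,
        Real.norm_eq_abs, abs_neg, abs_of_pos ha0]
      nlinarith
    have hy := key _ hmem
    have hlt : ((2 : ℝ) • c - EuclideanSpace.single i (-a)) i < a := by
      apply coord_i_lt n ε hε0 i _ hy a ha0
      rw [ha3, ← div_eq_mul_inv, lt_div_iff₀ h1e]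
      linarith
    rw [PiLp.sub_apply, PiLp.smul_apply, EuclideanSpace.single_apply, if_pos rfl] at hlt
    simp only [smul_eq_mul] at hlt
    linarith
  -- Step 2: all other coordinates of c vanish
  have hcj : ∀ j : Fin n, j ≠ i → c j = 0 := by
    intro j hj
    have hp := key _ (hsingle j hj 1 (by norm_num))
    have hm := key _ (hsingle j hj (-1) (by norm_num))
    have h1 := coord_sq_le n ε hε0 hε1 i j hj _ hp
    have h2 := coord_sq_le n ε hε0 hε1 i j hj _ hm
    rw [PiLp.sub_apply, PiLp.smul_apply, EuclideanSpace.single_apply, if_pos rfl] at h1 h2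
    simp only [smul_eq_mul] at h1 h2
    nlinarith
  -- Step 3: the contradiction
  have hj0 : (⟨0, by omega⟩ : Fin n) ≠ i := by
    rw [hidef]
    simp only [ne_eq, Fin.mk.injEq]
    omega
  set j0 : Fin n := ⟨0, by omega⟩ with hj0def
  have hz := key _ (hsingle j0 hj0 (-1) (by norm_num))
  set z : EuclideanSpace ℝ (Fin n) := (2 : ℝ) • c - EuclideanSpace.single j0 (-1) with hzdef
  have hzk : ∀ k : Fin n, z k = 2 * c k - (if k = j0 then (-1:ℝ) else 0) := by
    intro k
    rw [hzdef, PiLp.sub_apply, PiLp.smul_apply, EuclideanSpace.single_apply]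
    simp [smul_eq_mul]
  have hz2 : ‖z‖ ^ 2 = 1 + 4 * (c i) ^ 2 := by
    rw [norm_sq_eq_sum]
    rw [← Finset.sum_subset (Finset.subset_univ ({j0, i} : Finset (Fin n)))
      (fun k _ hk => ?_)]
    · rw [Finset.sum_pair hj0, hzk j0, hzk i, if_pos rfl, if_neg (Ne.symm hj0),
        hcj j0 hj0]
      ring
    · simp only [Finset.mem_insert, Finset.mem_singleton, not_or] at hk
      rw [hzk k, if_neg hk.1, hcj k hk.2]
      ring
  have hzmem : ‖z‖ ^ 3 + ε * (z i) ^ 3 ≤ 1 := hz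
  set u : ℝ := -(c i) with hu
  have hu0 : 0 < u := by rw [hu]; linarith
  have hzi : z i = -(2 * u) := by rw [hzk i, if_neg (Ne.symm hj0), hu]; ring
  have hz3 : ‖z‖ ^ 3 ≤ 1 + 8 * ε * u ^ 3 := by
    rw [hzi] at hzmem
    nlinarith
  have hrhs : (0:ℝ) ≤ 1 + 8 * ε * u ^ 3 := by positivity
  have h6 : (1 + 4 * u ^ 2) ^ 3 ≤ (1 + 8 * ε * u ^ 3) ^ 2 := by
    have : (‖z‖ ^ 2) ^ 3 ≤ (1 + 8 * ε * u ^ 3) ^ 2 := by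
      nlinarith [norm_nonneg z, pow_nonneg (norm_nonneg z) 3]
    rw [hz2] at this
    have hcu : (c i) ^ 2 = u ^ 2 := by rw [hu]; ring
    rw [hcu] at this
    exact this
  have hu3 : (0:ℝ) < u ^ 3 := by positivity
  have hle : 1 + 8 * ε * u ^ 3 ≤ 1 + 8 * u ^ 3 := by nlinarith
  have he2 : (1 + 8 * ε * u ^ 3) ^ 2 ≤ (1 + 8 * u ^ 3) ^ 2 :=
    pow_le_pow_left₀ hrhs hle 2
  nlinarith [h6, he2, mul_nonneg (sq_nonneg (6 * u - 1)) (sq_nonneg u),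
    mul_pos hu0 hu0]
end

section
/- There exists δ₁ ∈ (0,1) such that for every 0 < ε < δ₁ the following holds: for each (t, φ, s) ∈ (−1/4, 1/4) × ℝ × [−1, 1] there is exactly one y ∈ (1/2, 3/2) with (t² + y²)^{3/2} + ε (t cos φ + y s sin φ)³ = 1, and the function ρ_ε(t, φ, s) defined as this unique y is infinitely differentiable in (t, φ, s) on (−1/4, 1/4) × ℝ × [−1, 1] (one-sided derivatives being taken at s = ±1). -/
open Set Real
set_option maxHeartbeats 1000000

noncomputable def F7 (ε : ℝ) (p : ℝ × ℝ × ℝ × ℝ) : ℝ :=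
  (p.1 ^ 2 + p.2.2.2 ^ 2) ^ ((3:ℝ)/2) +
    ε * (p.1 * Real.cos p.2.1 + p.2.2.2 * p.2.2.1 * Real.sin p.2.1) ^ 3

lemma quarter_rpow : ((1:ℝ)/4) ^ ((1:ℝ)/2) = 1/2 := by
  rw [show ((1:ℝ)/4) = ((1:ℝ)/2)^(2:ℕ) by norm_num, ← Real.rpow_natCast ((1:ℝ)/2) 2,
    ← Real.rpow_mul (by norm_num)]
  norm_num

lemma aux_sum {u v : ℝ} (hu1 : -(13/4) ≤ u) (hu2 : u ≤ 13/4)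
    (hv1 : -(13/4) ≤ v) (hv2 : v ≤ 13/4) : |v^2 + v*u + u^2| ≤ 507/16 := by
  have husq : u^2 ≤ 169/16 := by nlinarith
  have hvsq : v^2 ≤ 169/16 := by nlinarith
  rw [abs_le]
  refine ⟨by nlinarith [sq_nonneg (u+v)], by nlinarith [sq_nonneg (u-v)]⟩

lemma aux_eps {ε d c : ℝ} (hε0 : 0 < ε) (hε : ε < 1/200) (hd : 0 < d)
    (hc1 : -((507/8) * d) ≤ c) (hc2 : c ≤ (507/8) * d) : -((507/1600) * d) ≤ ε * c := by
  nlinarith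

lemma key_mono {ε t φ s y₁ y₂ : ℝ} (hε0 : 0 < ε) (hε : ε < 1/200)
    (ht : |t| ≤ 1/4) (hs : |s| ≤ 2)
    (h1 : y₁ ∈ Icc (1/2:ℝ) (3/2)) (h2 : y₂ ∈ Icc (1/2:ℝ) (3/2)) (hlt : y₁ < y₂) :
    F7 ε (t, φ, s, y₁) < F7 ε (t, φ, s, y₂) := by
  obtain ⟨h1a, h1b⟩ := h1
  obtain ⟨h2a, h2b⟩ := h2
  simp only [F7]
  set p := t ^ 2 + y₁ ^ 2 with hp
  set q := t ^ 2 + y₂ ^ 2 with hq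
  have hp0 : (1/4:ℝ) ≤ p := by nlinarith
  have hq0 : (0:ℝ) < q := by nlinarith
  have hpq : p ≤ q := by nlinarith
  -- A part
  have h32 : (3:ℝ)/2 = 1 + 1/2 := by norm_num
  have hqe : q ^ ((3:ℝ)/2) = q * q ^ ((1:ℝ)/2) := by
    rw [h32, Real.rpow_add hq0, Real.rpow_one]
  have hpe : p ^ ((3:ℝ)/2) = p * p ^ ((1:ℝ)/2) := by
    rw [h32, Real.rpow_add (by linarith), Real.rpow_one]
  have hsq : p ^ ((1:ℝ)/2) ≤ q ^ ((1:ℝ)/2) :=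
    Real.rpow_le_rpow (by linarith) hpq (by norm_num)
  have hphalf : (1/2:ℝ) ≤ p ^ ((1:ℝ)/2) := by
    calc (1/2:ℝ) = ((1:ℝ)/4) ^ ((1:ℝ)/2) := quarter_rpow.symm
    _ ≤ p ^ ((1:ℝ)/2) := Real.rpow_le_rpow (by norm_num) hp0 (by norm_num)
  have hA : (q - p) * ((1:ℝ)/2) ≤ q ^ ((3:ℝ)/2) - p ^ ((3:ℝ)/2) := by
    rw [hqe, hpe]
    nlinarith [mul_le_mul_of_nonneg_left hsq (le_of_lt hq0)]
  -- B part
  set b := s * Real.sin φ with hbdef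
  set u := t * Real.cos φ + y₁ * b with hu
  set v := t * Real.cos φ + y₂ * b with hv
  have hb : |b| ≤ 2 := by
    rw [hbdef, abs_mul]
    calc |s| * |Real.sin φ| ≤ 2 * 1 := by
          exact mul_le_mul hs (Real.abs_sin_le_one φ) (abs_nonneg _) (by norm_num)
    _ = 2 := by norm_num
  have ha : |t * Real.cos φ| ≤ 1/4 := by
    rw [abs_mul]
    calc |t| * |Real.cos φ| ≤ (1/4) * 1 :=
          mul_le_mul ht (Real.abs_cos_le_one φ) (abs_nonneg _) (by norm_num)
    _ = 1/4 := by norm_num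
  have hub : |u| ≤ 13/4 := by
    rw [hu]
    calc |t * Real.cos φ + y₁ * b| ≤ |t * Real.cos φ| + |y₁ * b| := abs_add_le _ _
    _ ≤ 1/4 + 3 := by
        have : |y₁ * b| ≤ 3 := by
          rw [abs_mul]
          have hy : |y₁| ≤ 3/2 := by rw [abs_le]; constructor <;> linarith
          calc |y₁| * |b| ≤ (3/2) * 2 := mul_le_mul hy hb (abs_nonneg _) (by norm_num)
          _ = 3 := by norm_num
        linarith
    _ = 13/4 := by norm_num
  have hvb : |v| ≤ 13/4 := by
    rw [hv]
    calc |t * Real.cos φ + y₂ * b| ≤ |t * Real.cos φ| + |y₂ * b| := abs_add_le _ _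
    _ ≤ 1/4 + 3 := by
        have : |y₂ * b| ≤ 3 := by
          rw [abs_mul]
          have hy : |y₂| ≤ 3/2 := by rw [abs_le]; constructor <;> linarith
          calc |y₂| * |b| ≤ (3/2) * 2 := mul_le_mul hy hb (abs_nonneg _) (by norm_num)
          _ = 3 := by norm_num
        linarith
    _ = 13/4 := by norm_num
  obtain ⟨hu1, hu2⟩ := abs_le.mp hub
  obtain ⟨hv1, hv2⟩ := abs_le.mp hvb
  obtain ⟨hb1, hb2⟩ := abs_le.mp hb
  have hcube : |v ^ 3 - u ^ 3| ≤ (507/8) * (y₂ - y₁) := by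
    have hfac : v ^ 3 - u ^ 3 = (v - u) * (v^2 + v*u + u^2) := by ring
    rw [hfac, abs_mul]
    have hvu : |v - u| ≤ 2 * (y₂ - y₁) := by
      have : v - u = (y₂ - y₁) * b := by rw [hu, hv]; ring
      rw [this, abs_mul, abs_of_pos (by linarith : (0:ℝ) < y₂ - y₁)]
      nlinarith
    have hsum : |v^2 + v*u + u^2| ≤ 507/16 := aux_sum hu1 hu2 hv1 hv2
    calc |v - u| * |v^2 + v*u + u^2| ≤ (2 * (y₂ - y₁)) * (507/16) := by
          apply mul_le_mul hvu hsum (abs_nonneg _) (by linarith)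
    _ = (507/8) * (y₂ - y₁) := by ring
  obtain ⟨hc1, hc2⟩ := abs_le.mp hcube
  have hεB : -((507/1600) * (y₂ - y₁)) ≤ ε * (v^3 - u^3) :=
    aux_eps hε0 hε (by linarith) (by linarith) hc2
  have hAd : (y₂ - y₁) * ((1:ℝ)/2) ≤ q ^ ((3:ℝ)/2) - p ^ ((3:ℝ)/2) := by
    have hqp : y₂ - y₁ ≤ q - p := by rw [hp, hq]; nlinarith
    nlinarith [hA]
  have key : (t ^ 2 + y₁ ^ 2) ^ ((3:ℝ)/2) + ε * u ^ 3 <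
      (t ^ 2 + y₂ ^ 2) ^ ((3:ℝ)/2) + ε * v ^ 3 := by
    rw [← hp, ← hq]
    linarith
  have e1 : t * Real.cos φ + y₁ * s * Real.sin φ = u := by rw [hu, hbdef]; ring
  have e2 : t * Real.cos φ + y₂ * s * Real.sin φ = v := by rw [hv, hbdef]; ring
  rw [e1, e2]
  exact key

lemma cube_abs_le {u : ℝ} (h1 : -(13/4) ≤ u) (h2 : u ≤ 13/4) :
    -(2197/64) ≤ u^3 ∧ u^3 ≤ 2197/64 := by
  have a : (0:ℝ) ≤ 13/4 - u := by linarith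
  have b : (0:ℝ) ≤ u + 13/4 := by linarith
  constructor
  · nlinarith [mul_nonneg b (sq_nonneg (13/4 - u))]
  · nlinarith [mul_nonneg a (sq_nonneg (u + 13/4))]

lemma uv_bound {t φ s y : ℝ} (ht : |t| ≤ 1/4) (hs : |s| ≤ 2) (hy : |y| ≤ 3/2) :
    |t * Real.cos φ + y * s * Real.sin φ| ≤ 13/4 := by
  calc |t * Real.cos φ + y * s * Real.sin φ|
      ≤ |t * Real.cos φ| + |y * s * Real.sin φ| := abs_add_le _ _
    _ ≤ 1/4 + 3 := by
        have h1 : |t * Real.cos φ| ≤ 1/4 := by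
          rw [abs_mul]
          calc |t| * |Real.cos φ| ≤ (1/4) * 1 :=
                mul_le_mul ht (Real.abs_cos_le_one φ) (abs_nonneg _) (by norm_num)
          _ = 1/4 := by norm_num
        have h2 : |y * s * Real.sin φ| ≤ 3 := by
          rw [abs_mul, abs_mul]
          have hys : |y| * |s| ≤ 3 := by
            calc |y| * |s| ≤ (3/2) * 2 := mul_le_mul hy hs (abs_nonneg _) (by norm_num)
            _ = 3 := by norm_num
          calc |y| * |s| * |Real.sin φ| ≤ 3 * 1 :=
                mul_le_mul hys (Real.abs_sin_le_one φ) (abs_nonneg _) (by norm_num)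
          _ = 3 := by norm_num
        linarith
    _ = 13/4 := by norm_num

lemma endpoint_lo {ε t φ s : ℝ} (hε0 : 0 < ε) (hε : ε < 1/200)
    (ht : |t| ≤ 1/4) (hs : |s| ≤ 2) : F7 ε (t, φ, s, 1/2) < 1 := by
  simp only [F7]
  have hu := uv_bound (φ := φ) (y := 1/2) ht hs (by rw [abs_of_pos] <;> norm_num)
  obtain ⟨hu1, hu2⟩ := abs_le.mp hu
  obtain ⟨_, hcub⟩ := cube_abs_le hu1 hu2
  obtain ⟨ht1, ht2⟩ := abs_le.mp ht
  have hbase : t^2 + (1/2:ℝ)^2 ≤ 1/2 := by nlinarith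
  have hA : (t^2 + (1/2:ℝ)^2) ^ ((3:ℝ)/2) ≤ ((1:ℝ)/2) ^ ((3:ℝ)/2) :=
    Real.rpow_le_rpow (by positivity) hbase (by norm_num)
  have hB : ((1:ℝ)/2) ^ ((3:ℝ)/2) ≤ ((1:ℝ)/2) ^ ((1:ℝ)) :=
    Real.rpow_le_rpow_of_exponent_ge (by norm_num) (by norm_num) (by norm_num)
  rw [Real.rpow_one] at hB
  have hεc : ε * (t * Real.cos φ + 1/2 * s * Real.sin φ)^3 ≤ ε * (2197/64) := by
    apply mul_le_mul_of_nonneg_left hcub (le_of_lt hε0)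
  nlinarith

lemma endpoint_hi {ε t φ s : ℝ} (hε0 : 0 < ε) (hε : ε < 1/200)
    (ht : |t| ≤ 1/4) (hs : |s| ≤ 2) : 1 < F7 ε (t, φ, s, 3/2) := by
  simp only [F7]
  have hu := uv_bound (φ := φ) (y := 3/2) ht hs (by rw [abs_of_pos] <;> norm_num)
  obtain ⟨hu1, hu2⟩ := abs_le.mp hu
  obtain ⟨hcub, _⟩ := cube_abs_le hu1 hu2
  have hbase : (9/4:ℝ) ≤ t^2 + (3/2:ℝ)^2 := by nlinarith [sq_nonneg t]
  have hA : ((9:ℝ)/4) ^ ((3:ℝ)/2) ≤ (t^2 + (3/2:ℝ)^2) ^ ((3:ℝ)/2) :=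
    Real.rpow_le_rpow (by norm_num) hbase (by norm_num)
  have hB : ((9:ℝ)/4) ^ ((1:ℝ)) ≤ ((9:ℝ)/4) ^ ((3:ℝ)/2) :=
    Real.rpow_le_rpow_of_exponent_le (by norm_num) (by norm_num)
  rw [Real.rpow_one] at hB
  have hεc : ε * (-(2197/64)) ≤ ε * (t * Real.cos φ + 3/2 * s * Real.sin φ)^3 :=
    mul_le_mul_of_nonneg_left hcub (le_of_lt hε0)
  nlinarith

lemma F7_cont (ε t φ s : ℝ) :
    Continuous fun y : ℝ => F7 ε (t, φ, s, y) := by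
  simp only [F7]
  apply Continuous.add
  · apply Continuous.rpow_const (by continuity)
    intro x; right; norm_num
  · continuity

lemma exu7 {ε t φ s : ℝ} (hε0 : 0 < ε) (hε : ε < 1/200)
    (ht : |t| ≤ 1/4) (hs : |s| ≤ 2) :
    ∃! y : ℝ, y ∈ Ioo ((1:ℝ)/2) ((3:ℝ)/2) ∧ F7 ε (t, φ, s, y) = 1 := by
  set g := fun y : ℝ => F7 ε (t, φ, s, y) with hg
  have hsub := intermediate_value_Ioo (by norm_num : (1:ℝ)/2 ≤ 3/2) (F7_cont ε t φ s).continuousOn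
  have h1 : (1:ℝ) ∈ Ioo (g (1/2)) (g (3/2)) := ⟨endpoint_lo hε0 hε ht hs, endpoint_hi hε0 hε ht hs⟩
  obtain ⟨y, hy, hgy⟩ := hsub h1
  refine ⟨y, ⟨hy, hgy⟩, ?_⟩
  rintro z ⟨hz, hgz⟩
  by_contra hne
  rcases lt_or_gt_of_ne hne with h | h
  · have := key_mono (φ := φ) hε0 hε ht hs (Ioo_subset_Icc_self hz) (Ioo_subset_Icc_self hy) h
    simp only [] at hgy; rw [hgz] at this; rw [hgy] at this; exact lt_irrefl _ this
  · have := key_mono (φ := φ) hε0 hε ht hs (Ioo_subset_Icc_self hy) (Ioo_subset_Icc_self hz) h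
    simp only [] at hgy; rw [hgz] at this; rw [hgy] at this; exact lt_irrefl _ this

lemma inner7_contDiff :
    ContDiff ℝ (⊤ : ℕ∞) (fun p : ℝ × ℝ × ℝ × ℝ =>
      p.1 * Real.cos p.2.1 + p.2.2.2 * p.2.2.1 * Real.sin p.2.1) := by
  apply ContDiff.add
  · exact contDiff_fst.mul (Real.contDiff_cos.comp (contDiff_fst.comp contDiff_snd))
  · exact ((contDiff_snd.comp (contDiff_snd.comp contDiff_snd)).mul
      (contDiff_fst.comp (contDiff_snd.comp contDiff_snd))).mul
      (Real.contDiff_sin.comp (contDiff_fst.comp contDiff_snd))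

lemma F7_contDiffAt {ε : ℝ} {p : ℝ × ℝ × ℝ × ℝ} (h : p.1 ^ 2 + p.2.2.2 ^ 2 ≠ 0) :
    ContDiffAt ℝ (⊤ : ℕ∞) (F7 ε) p := by
  unfold F7
  apply ContDiffAt.add
  · exact ContDiffAt.rpow_const_of_ne (by fun_prop) h
  · exact contDiffAt_const.mul (inner7_contDiff.contDiffAt.pow 3)

lemma section_hasDerivAt (ε t φ s y : ℝ) :
    HasDerivAt (fun y : ℝ => F7 ε (t, φ, s, y))
      (3 * y * (t ^ 2 + y ^ 2) ^ ((1:ℝ)/2) +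
        ε * (3 * (t * Real.cos φ + y * s * Real.sin φ) ^ 2 * (s * Real.sin φ))) y := by
  have h1 : HasDerivAt (fun y : ℝ => t ^ 2 + y ^ 2) (2 * y) y := by
    simpa using (hasDerivAt_pow 2 y).const_add (t ^ 2)
  have h1' := h1.rpow_const (p := (3:ℝ)/2) (Or.inr (by norm_num))
  have h2 : HasDerivAt (fun y : ℝ => t * Real.cos φ + y * s * Real.sin φ)
      (1 * s * Real.sin φ) y :=
    (((hasDerivAt_id y).mul_const s).mul_const (Real.sin φ)).const_add (t * Real.cos φ)
  have h3 := (h2.pow 3).const_mul ε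
  have := h1'.add h3
  refine this.congr_deriv ?_
  have hrw : (3:ℝ)/2 - 1 = 1/2 := by norm_num
  rw [hrw]
  ring

lemma Dpos {ε t φ s y : ℝ} (hε0 : 0 < ε) (hε : ε < 1/200) (ht : |t| ≤ 1/4) (hs : |s| ≤ 2)
    (hy : y ∈ Icc (1/2:ℝ) (3/2)) :
    0 < 3 * y * (t ^ 2 + y ^ 2) ^ ((1:ℝ)/2) +
        ε * (3 * (t * Real.cos φ + y * s * Real.sin φ) ^ 2 * (s * Real.sin φ)) := by
  obtain ⟨hy1, hy2⟩ := hy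
  have hb : |s * Real.sin φ| ≤ 2 := by
    rw [abs_mul]
    calc |s| * |Real.sin φ| ≤ 2 * 1 :=
          mul_le_mul hs (Real.abs_sin_le_one φ) (abs_nonneg _) (by norm_num)
    _ = 2 := by norm_num
  obtain ⟨hb1, hb2⟩ := abs_le.mp hb
  have hu := uv_bound (φ := φ) (y := y) ht hs (by rw [abs_of_pos (by linarith)]; linarith)
  obtain ⟨hu1, hu2⟩ := abs_le.mp hu
  set u := t * Real.cos φ + y * s * Real.sin φ with hudef
  have husq : u ^ 2 ≤ 169/16 := by nlinarith
  have hsqrt : (1/2:ℝ) ≤ (t ^ 2 + y ^ 2) ^ ((1:ℝ)/2) := by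
    calc (1/2:ℝ) = ((1:ℝ)/4) ^ ((1:ℝ)/2) := quarter_rpow.symm
    _ ≤ (t ^ 2 + y ^ 2) ^ ((1:ℝ)/2) :=
        Real.rpow_le_rpow (by norm_num) (by nlinarith) (by norm_num)
  have hfirst : (3:ℝ)/4 ≤ 3 * y * (t ^ 2 + y ^ 2) ^ ((1:ℝ)/2) := by nlinarith
  have hsec0 : -(507/8 : ℝ) ≤ 3 * u ^ 2 * (s * Real.sin φ) := by
    have h0 : (0:ℝ) ≤ 3 * u ^ 2 := by positivity
    have := mul_le_mul_of_nonneg_left hb1 h0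
    nlinarith
  have hsec : -(507/1600 : ℝ) ≤ ε * (3 * u ^ 2 * (s * Real.sin φ)) := by
    have := mul_le_mul_of_nonneg_left hsec0 hε0.le
    nlinarith
  linarith

noncomputable def G7 (ε : ℝ) (p : ℝ × ℝ × ℝ × ℝ) : ℝ × ℝ × ℝ × ℝ :=
  (p.1, p.2.1, p.2.2.1, F7 ε p)

open scoped Classical in
noncomputable def rho7 (ε : ℝ) (q : ℝ × ℝ × ℝ) : ℝ :=
  if h : ∃ y : ℝ, y ∈ Ioo ((1:ℝ)/2) ((3:ℝ)/2) ∧ F7 ε (q.1, q.2.1, q.2.2, y) = 1 then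
    h.choose else 1

lemma rho7_spec {ε : ℝ} {q : ℝ × ℝ × ℝ}
    (h : ∃ y : ℝ, y ∈ Ioo ((1:ℝ)/2) ((3:ℝ)/2) ∧ F7 ε (q.1, q.2.1, q.2.2, y) = 1) :
    rho7 ε q ∈ Ioo ((1:ℝ)/2) ((3:ℝ)/2) ∧ F7 ε (q.1, q.2.1, q.2.2, rho7 ε q) = 1 := by
  rw [rho7, dif_pos h]
  exact h.choose_spec

lemma rho7_contDiffAt {ε : ℝ} (hε0 : 0 < ε) (hε : ε < 1/200) {q₀ : ℝ × ℝ × ℝ}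
    (ht : |q₀.1| < 1/4) (hs : |q₀.2.2| < 2) :
    ContDiffAt ℝ (⊤ : ℕ∞) (rho7 ε) q₀ := by
  obtain ⟨t₀, φ₀, s₀⟩ := q₀
  simp only at ht hs
  obtain ⟨y₀, ⟨hy₀, hF₀⟩, huniq⟩ := exu7 (t := t₀) (φ := φ₀) (s := s₀) hε0 hε ht.le hs.le
  have hbase : ((t₀, φ₀, s₀, y₀) : ℝ × ℝ × ℝ × ℝ).1 ^ 2 +
      ((t₀, φ₀, s₀, y₀) : ℝ × ℝ × ℝ × ℝ).2.2.2 ^ 2 ≠ 0 := by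
    have : (0:ℝ) < t₀ ^ 2 + y₀ ^ 2 := by nlinarith [hy₀.1, sq_nonneg t₀]
    exact ne_of_gt this
  have hFc : ContDiffAt ℝ (⊤ : ℕ∞) (F7 ε) (t₀, φ₀, s₀, y₀) := F7_contDiffAt hbase
  have hFd : DifferentiableAt ℝ (F7 ε) (t₀, φ₀, s₀, y₀) := hFc.differentiableAt (by simp)
  set L := fderiv ℝ (F7 ε) (t₀, φ₀, s₀, y₀) with hLdef
  have hL : HasFDerivAt (F7 ε) L (t₀, φ₀, s₀, y₀) := hFd.hasFDerivAt
  -- derivative in the last variable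
  set J : ℝ →L[ℝ] ℝ × ℝ × ℝ × ℝ :=
    (0 : ℝ →L[ℝ] ℝ).prod ((0 : ℝ →L[ℝ] ℝ).prod
      ((0 : ℝ →L[ℝ] ℝ).prod (ContinuousLinearMap.id ℝ ℝ))) with hJdef
  have hι : HasFDerivAt (fun y : ℝ => ((t₀, φ₀, s₀, y) : ℝ × ℝ × ℝ × ℝ)) J y₀ :=
    (hasFDerivAt_const _ _).prodMk ((hasFDerivAt_const _ _).prodMk
      ((hasFDerivAt_const _ _).prodMk (hasFDerivAt_id _)))
  have hcomp : HasDerivAt (fun y : ℝ => F7 ε (t₀, φ₀, s₀, y)) (L (J 1)) y₀ := by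
    have := (hL.comp y₀ hι).hasDerivAt
    exact this
  set D : ℝ := 3 * y₀ * (t₀ ^ 2 + y₀ ^ 2) ^ ((1:ℝ)/2) +
      ε * (3 * (t₀ * Real.cos φ₀ + y₀ * s₀ * Real.sin φ₀) ^ 2 * (s₀ * Real.sin φ₀)) with hDdef
  have hDval : L (J 1) = D := hcomp.unique (section_hasDerivAt ε t₀ φ₀ s₀ y₀)
  have hD : 0 < D := Dpos hε0 hε ht.le hs.le (Ioo_subset_Icc_self hy₀)
  have hJ1 : J 1 = ((0, 0, 0, 1) : ℝ × ℝ × ℝ × ℝ) := by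
    simp [hJdef]
  -- the full map G7 and its derivative
  set P1 : (ℝ × ℝ × ℝ × ℝ) →L[ℝ] ℝ := ContinuousLinearMap.fst ℝ ℝ (ℝ × ℝ × ℝ) with hP1
  set P2 : (ℝ × ℝ × ℝ × ℝ) →L[ℝ] ℝ :=
    (ContinuousLinearMap.fst ℝ ℝ (ℝ × ℝ)).comp (ContinuousLinearMap.snd ℝ ℝ (ℝ × ℝ × ℝ)) with hP2
  set P3 : (ℝ × ℝ × ℝ × ℝ) →L[ℝ] ℝ :=
    (ContinuousLinearMap.fst ℝ ℝ ℝ).comp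
      ((ContinuousLinearMap.snd ℝ ℝ (ℝ × ℝ)).comp (ContinuousLinearMap.snd ℝ ℝ (ℝ × ℝ × ℝ))) with hP3
  set M₀ : (ℝ × ℝ × ℝ × ℝ) →L[ℝ] ℝ × ℝ × ℝ × ℝ := P1.prod (P2.prod (P3.prod L)) with hM₀
  have hGd : HasFDerivAt (G7 ε) M₀ (t₀, φ₀, s₀, y₀) := by
    apply HasFDerivAt.prodMk hasFDerivAt_fst
    apply HasFDerivAt.prodMk (hasFDerivAt_fst.comp _ hasFDerivAt_snd)
    exact HasFDerivAt.prodMk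
      ((hasFDerivAt_fst.comp _ (hasFDerivAt_snd.comp _ hasFDerivAt_snd))) hL
  have hinj : Function.Injective M₀ := by
    intro v w hvw
    have h1 : M₀ (v - w) = 0 := by rw [map_sub, hvw, sub_self]
    set z := v - w with hz
    have hz1 : z.1 = 0 := congrArg (fun r : ℝ × ℝ × ℝ × ℝ => r.1) h1
    have hz2 : z.2.1 = 0 := congrArg (fun r : ℝ × ℝ × ℝ × ℝ => r.2.1) h1
    have hz3 : z.2.2.1 = 0 := congrArg (fun r : ℝ × ℝ × ℝ × ℝ => r.2.2.1) h1
    have hz4 : L z = 0 := congrArg (fun r : ℝ × ℝ × ℝ × ℝ => r.2.2.2) h1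
    have hzeq : z = z.2.2.2 • ((0, 0, 0, 1) : ℝ × ℝ × ℝ × ℝ) := by
      rw [Prod.ext_iff, Prod.ext_iff, Prod.ext_iff]
      refine ⟨by simpa using hz1, by simpa using hz2, by simpa using hz3, by simp⟩
    have : z.2.2.2 * D = 0 := by
      have := hz4
      rw [hzeq, map_smul] at this
      rw [← hJ1] at this
      rw [hDval] at this
      simpa using this
    have hz40 : z.2.2.2 = 0 := by
      rcases mul_eq_zero.mp this with h | h
      · exact h
      · exact absurd h (ne_of_gt hD)
    have : z = 0 := by rw [hzeq, hz40, zero_smul]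
    have := sub_eq_zero.mp (hz ▸ this)
    exact this
  have hsurj : Function.Surjective (M₀ : (ℝ × ℝ × ℝ × ℝ) →ₗ[ℝ] ℝ × ℝ × ℝ × ℝ) :=
    LinearMap.injective_iff_surjective.mp hinj
  set Me : (ℝ × ℝ × ℝ × ℝ) ≃L[ℝ] ℝ × ℝ × ℝ × ℝ :=
    (LinearEquiv.ofBijective (M₀ : (ℝ × ℝ × ℝ × ℝ) →ₗ[ℝ] ℝ × ℝ × ℝ × ℝ)
      ⟨hinj, hsurj⟩).toContinuousLinearEquiv with hMe
  have hMcoe : (Me : (ℝ × ℝ × ℝ × ℝ) →L[ℝ] ℝ × ℝ × ℝ × ℝ) = M₀ := by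
    ext v <;> rfl
  have hG' : HasFDerivAt (G7 ε) (Me : (ℝ × ℝ × ℝ × ℝ) →L[ℝ] ℝ × ℝ × ℝ × ℝ) (t₀, φ₀, s₀, y₀) := by
    rw [hMcoe]; exact hGd
  have hGc : ContDiffAt ℝ (⊤ : ℕ∞) (G7 ε) (t₀, φ₀, s₀, y₀) := by
    unfold G7
    exact (contDiff_fst.contDiffAt).prodMk
      (((contDiff_fst.comp contDiff_snd).contDiffAt).prodMk
        (((contDiff_fst.comp (contDiff_snd.comp contDiff_snd)).contDiffAt).prodMk hFc))
  -- local inverse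
  set g : ℝ × ℝ × ℝ × ℝ → ℝ × ℝ × ℝ × ℝ := hGc.localInverse hG' (by simp) with hgdef
  have hg_cd : ContDiffAt ℝ (⊤ : ℕ∞) g (G7 ε (t₀, φ₀, s₀, y₀)) := hGc.to_localInverse hG' (by simp)
  have hSt : HasStrictFDerivAt (G7 ε) (Me : (ℝ × ℝ × ℝ × ℝ) →L[ℝ] ℝ × ℝ × ℝ × ℝ)
      (t₀, φ₀, s₀, y₀) := hGc.hasStrictFDerivAt' hG' (by simp)
  have hright : ∀ᶠ z in nhds (G7 ε (t₀, φ₀, s₀, y₀)), G7 ε (g z) = z :=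
    hSt.eventually_right_inverse
  have hgval : g (G7 ε (t₀, φ₀, s₀, y₀)) = (t₀, φ₀, s₀, y₀) :=
    hGc.localInverse_apply_image hG' (by simp)
  have hGp₀ : G7 ε (t₀, φ₀, s₀, y₀) = (t₀, φ₀, s₀, 1) := by
    simp only [G7]
    rw [hF₀]
  -- candidate smooth function
  set c : ℝ × ℝ × ℝ → ℝ × ℝ × ℝ × ℝ := fun q => (q.1, q.2.1, q.2.2, 1) with hcdef
  have hc : ContDiff ℝ (⊤ : ℕ∞) c := by
    exact contDiff_fst.prodMk ((contDiff_fst.comp contDiff_snd).prodMk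
      ((contDiff_snd.comp contDiff_snd).prodMk contDiff_const))
  have hcq₀ : c (t₀, φ₀, s₀) = G7 ε (t₀, φ₀, s₀, y₀) := by rw [hGp₀]
  have hctend : Filter.Tendsto c (nhds (t₀, φ₀, s₀)) (nhds (G7 ε (t₀, φ₀, s₀, y₀))) := by
    rw [← hcq₀]; exact hc.continuous.continuousAt
  set h : ℝ × ℝ × ℝ → ℝ := fun q => (g (c q)).2.2.2 with hhdef
  have hproj : ContDiff ℝ (⊤ : ℕ∞) (fun p : ℝ × ℝ × ℝ × ℝ => p.2.2.2) :=
    contDiff_snd.comp (contDiff_snd.comp contDiff_snd)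
  have hh : ContDiffAt ℝ (⊤ : ℕ∞) h (t₀, φ₀, s₀) := by
    have h1 : ContDiffAt ℝ (⊤ : ℕ∞) (fun z : ℝ × ℝ × ℝ × ℝ => (g z).2.2.2)
        (c (t₀, φ₀, s₀)) := by
      rw [hcq₀]
      exact hproj.contDiffAt.comp _ hg_cd
    exact h1.comp _ hc.contDiffAt
  -- eventual equality
  have hev1 : ∀ᶠ q in nhds ((t₀, φ₀, s₀) : ℝ × ℝ × ℝ), G7 ε (g (c q)) = c q :=
    hctend.eventually hright
  have hev2 : ∀ᶠ q in nhds ((t₀, φ₀, s₀) : ℝ × ℝ × ℝ),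
      (g (c q)).2.2.2 ∈ Ioo ((1:ℝ)/2) ((3:ℝ)/2) := by
    have h4 : Filter.Tendsto (fun z : ℝ × ℝ × ℝ × ℝ => (g z).2.2.2)
        (nhds (G7 ε (t₀, φ₀, s₀, y₀))) (nhds y₀) := by
      have hgt : Filter.Tendsto g (nhds (G7 ε (t₀, φ₀, s₀, y₀))) (nhds (t₀, φ₀, s₀, y₀)) := by
        have := hg_cd.continuousAt
        rw [ContinuousAt, hgval] at this
        exact this
      exact (hproj.continuous.tendsto ((t₀, φ₀, s₀, y₀) : ℝ × ℝ × ℝ × ℝ)).comp hgt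
    exact hctend.eventually (h4.eventually (Ioo_mem_nhds hy₀.1 hy₀.2))
  have hev3 : ∀ᶠ q in nhds ((t₀, φ₀, s₀) : ℝ × ℝ × ℝ), |q.1| < 1/4 := by
    have hco : ContinuousAt (fun q : ℝ × ℝ × ℝ => |q.1|) (t₀, φ₀, s₀) :=
      (continuous_abs.comp continuous_fst).continuousAt
    exact hco.eventually_lt continuousAt_const ht
  have hev4 : ∀ᶠ q in nhds ((t₀, φ₀, s₀) : ℝ × ℝ × ℝ), |q.2.2| < 2 := by
    have hco : ContinuousAt (fun q : ℝ × ℝ × ℝ => |q.2.2|) (t₀, φ₀, s₀) :=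
      (continuous_abs.comp (continuous_snd.comp continuous_snd)).continuousAt
    exact hco.eventually_lt continuousAt_const hs
  have heq : rho7 ε =ᶠ[nhds ((t₀, φ₀, s₀) : ℝ × ℝ × ℝ)] h := by
    filter_upwards [hev1, hev2, hev3, hev4] with q h1 h2 h3 h4
    have hx1 : (g (c q)).1 = q.1 := by
      have := congrArg (fun r : ℝ × ℝ × ℝ × ℝ => r.1) h1; simpa [G7, hcdef] using this
    have hx2 : (g (c q)).2.1 = q.2.1 := by
      have := congrArg (fun r : ℝ × ℝ × ℝ × ℝ => r.2.1) h1; simpa [G7, hcdef] using this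
    have hx3 : (g (c q)).2.2.1 = q.2.2 := by
      have := congrArg (fun r : ℝ × ℝ × ℝ × ℝ => r.2.2.1) h1; simpa [G7, hcdef] using this
    have hx4 : F7 ε (g (c q)) = 1 := by
      have := congrArg (fun r : ℝ × ℝ × ℝ × ℝ => r.2.2.2) h1; simpa [G7, hcdef] using this
    have hxeq : g (c q) = (q.1, q.2.1, q.2.2, (g (c q)).2.2.2) := by
      rw [Prod.ext_iff, Prod.ext_iff, Prod.ext_iff]
      exact ⟨hx1, hx2, hx3, rfl⟩
    have hFq : F7 ε (q.1, q.2.1, q.2.2, (g (c q)).2.2.2) = 1 := by rw [← hxeq]; exact hx4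
    obtain ⟨yq, hyqspec, huq⟩ :=
      exu7 (t := q.1) (φ := q.2.1) (s := q.2.2) hε0 hε h3.le h4.le
    have hexq : ∃ y : ℝ, y ∈ Ioo ((1:ℝ)/2) ((3:ℝ)/2) ∧
        F7 ε (q.1, q.2.1, q.2.2, y) = 1 := ⟨(g (c q)).2.2.2, h2, hFq⟩
    have hspec := rho7_spec hexq
    have e1 : rho7 ε q = yq := huq _ ⟨hspec.1, hspec.2⟩
    have e2 : (g (c q)).2.2.2 = yq := huq _ ⟨h2, hFq⟩
    rw [hhdef]
    simp only
    rw [e1, e2]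
  exact hh.congr_of_eventuallyEq heq


/-- There is `δ₁ ∈ (0,1)` such that for `0 < ε < δ₁`, the equation
`(t² + y²)^{3/2} + ε (t cos φ + y s sin φ)³ = 1` has a unique solution
`y = ρ_ε(t,φ,s) ∈ (1/2, 3/2)`, smooth in `(t,φ,s)` on `(-1/4,1/4) × ℝ × [-1,1]`. -/
theorem stmt7 :
    ∃ δ₁ : ℝ, 0 < δ₁ ∧ δ₁ < 1 ∧
      ∀ ε : ℝ, 0 < ε → ε < δ₁ →
        (∀ t ∈ Ioo (-(1 : ℝ) / 4) (1 / 4), ∀ φ : ℝ, ∀ s ∈ Icc (-1 : ℝ) 1,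
          ∃! y : ℝ, y ∈ Ioo ((1 : ℝ) / 2) ((3 : ℝ) / 2) ∧
            (t ^ 2 + y ^ 2) ^ ((3 : ℝ) / 2) +
              ε * (t * Real.cos φ + y * s * Real.sin φ) ^ 3 = 1) ∧
        ∃ ρ : ℝ × ℝ × ℝ → ℝ,
          (∀ t ∈ Ioo (-(1 : ℝ) / 4) (1 / 4), ∀ φ : ℝ, ∀ s ∈ Icc (-1 : ℝ) 1,
            ρ (t, φ, s) ∈ Ioo ((1 : ℝ) / 2) ((3 : ℝ) / 2) ∧
            (t ^ 2 + ρ (t, φ, s) ^ 2) ^ ((3 : ℝ) / 2) +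
              ε * (t * Real.cos φ + ρ (t, φ, s) * s * Real.sin φ) ^ 3 = 1) ∧
          ContDiffOn ℝ (⊤ : ℕ∞) ρ
            (Ioo (-(1 : ℝ) / 4) (1 / 4) ×ˢ (univ : Set ℝ) ×ˢ Icc (-1 : ℝ) 1) := by
  refine ⟨1/200, by norm_num, by norm_num, ?_⟩
  intro ε hε0 hε
  have habs : ∀ t ∈ Ioo (-(1 : ℝ) / 4) (1 / 4), |t| ≤ 1/4 := by
    intro t ht
    rw [abs_le]
    exact ⟨by linarith [ht.1], ht.2.le⟩
  have habs2 : ∀ s ∈ Icc (-1 : ℝ) 1, |s| ≤ 2 := by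
    intro s hs
    rw [abs_le]
    exact ⟨by linarith [hs.1], by linarith [hs.2]⟩
  refine ⟨?_, rho7 ε, ?_, ?_⟩
  · intro t ht φ s hs
    exact exu7 hε0 hε (habs t ht) (habs2 s hs)
  · intro t ht φ s hs
    obtain ⟨y, hy, _⟩ := exu7 (φ := φ) hε0 hε (habs t ht) (habs2 s hs)
    have hex : ∃ y : ℝ, y ∈ Ioo ((1:ℝ)/2) ((3:ℝ)/2) ∧
        F7 ε (((t, φ, s) : ℝ × ℝ × ℝ).1, ((t, φ, s) : ℝ × ℝ × ℝ).2.1,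
          ((t, φ, s) : ℝ × ℝ × ℝ).2.2, y) = 1 := ⟨y, hy⟩
    exact rho7_spec hex
  · intro q hq
    have ht : |q.1| < 1/4 := by
      have h1 := hq.1
      rw [abs_lt]
      exact ⟨by linarith [h1.1], h1.2⟩
    have hs : |q.2.2| < 2 := by
      have h2 := hq.2.2
      have := abs_le.mpr ⟨h2.1, h2.2⟩
      linarith
    exact (rho7_contDiffAt hε0 hε ht hs).contDiffWithinAt
end
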